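/- arXiv:1612.02972 — 2 statements merged into one kernel-verified Lean document; each statement's English description precedes it below -/
import Mathlib

section
/- The dimension function on a fusion algebra (an algebra homomorphism to ℝ with dim₀ = 1 and dimᵢ ≥ 1 for all i) is unique. -/
private lemma dim_le {I : Type*} [Fintype I]
    (n : I → I → I → ℕ) (e : I)
    (d d' : I → ℝ)
    (hd : ∀ i, 1 ≤ d i) (hd' : ∀ i, 1 ≤ d' i)
    (hdhom : ∀ i j, d i * d j = ∑ l, (n i j l : ℝ) * d l)
    (hd'hom : ∀ i j, d' i * d' j = ∑ l, (n i j l : ℝ) * d' l) :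
    ∀ j, d j ≤ d' j := by
  have hne : Nonempty I := ⟨e⟩
  obtain ⟨i0, hi0⟩ := Finite.exists_max (fun i => d i / d' i)
  have hpos : ∀ i, (0:ℝ) < d' i := fun i => lt_of_lt_of_le one_pos (hd' i)
  have hdpos : ∀ i, (0:ℝ) < d i := fun i => lt_of_lt_of_le one_pos (hd i)
  have hle : ∀ l, d l ≤ d i0 / d' i0 * d' l := by
    intro l
    have h := hi0 l
    rw [div_le_div_iff₀ (hpos l) (hpos i0)] at h
    rw [div_mul_eq_mul_div, le_div_iff₀ (hpos i0)]
    linarith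
  intro j
  have key : d i0 * d j ≤ d i0 / d' i0 * (d' i0 * d' j) := by
    rw [hdhom, hd'hom, Finset.mul_sum]
    apply Finset.sum_le_sum
    intro l _
    calc (n i0 j l : ℝ) * d l ≤ (n i0 j l : ℝ) * (d i0 / d' i0 * d' l) :=
          mul_le_mul_of_nonneg_left (hle l) (Nat.cast_nonneg _)
      _ = d i0 / d' i0 * ((n i0 j l : ℝ) * d' l) := by ring
  have h2 : d i0 / d' i0 * (d' i0 * d' j) = d i0 * d' j := by
    field_simp [(hpos i0).ne']
  rw [h2] at key
  exact le_of_mul_le_mul_left key (hdpos i0)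

/-- Uniqueness of the dimension function of a fusion algebra.
If `d` and `d'` are both dimension functions (`d e = 1`, `d i ≥ 1`,
`d i * d j = ∑ l, n i j l * d l`, `d (conj i) = d i`) on a fusion algebra with
finite basis index `I`, structure constants `n`, unit `e`, and involution `conj`
satisfying `n i j e = δ_{j, conj i}`, then `d = d'`. -/
theorem stmt2 {I : Type*} [Fintype I] [DecidableEq I]
    (n : I → I → I → ℕ) (e : I) (conj : I → I)
    (hunitl : ∀ j l, n e j l = if l = j then 1 else 0)
    (hunitr : ∀ i l, n i e l = if l = i then 1 else 0)
    (hconj : ∀ i j, n i j e = if j = conj i then 1 else 0)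
    (hinv : ∀ i, conj (conj i) = i)
    (d d' : I → ℝ)
    (hd1 : d e = 1) (hd : ∀ i, 1 ≤ d i)
    (hdconj : ∀ i, d (conj i) = d i)
    (hdhom : ∀ i j, d i * d j = ∑ l, (n i j l : ℝ) * d l)
    (hd'1 : d' e = 1) (hd' : ∀ i, 1 ≤ d' i)
    (hd'conj : ∀ i, d' (conj i) = d' i)
    (hd'hom : ∀ i j, d' i * d' j = ∑ l, (n i j l : ℝ) * d' l) :
    d = d' := by
  funext j
  exact le_antisymm (dim_le n e d d' hd hd' hdhom hd'hom j)
    (dim_le n e d' d hd' hd hd'hom hdhom j)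
end

section
/- The hypergroup with basis {k₀, k₁}, unit k₀, and relation k₁² = λ·k₀ + (1−λ)·k₁ arises from a fusion algebra f₁² = f₀ + n·f₁ (n ∈ ℕ) by rescaling if and only if λ is of the form λ = x with x = 1 + r/2 − r·√(1/4 + r⁻¹) for some r = n²/1 ∈ ℚ; in particular, for λ = 1/(2+√3) (so that 1−λ = (1+√3)/(2+√3)) there is no n ∈ ℕ with a fusion algebra f₁² = f₀ + n f₁ whose rescaled hypergroup has coefficient λ. -/
/-!
The dimension `d` of `f₁` is the positive root `(n + √(n² + 4)) / 2` of `d² = 1 + n d`, and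
`d (d - n) = 1` gives `1 / d² = (d - n)² = 1 + n²/2 - n √(n² + 4) / 2`, which is the paper's
formula at `r = n²`. For `λ = 1 / (2 + √3)` we would need `d² = 2 + √3`, hence `n d = 1 + √3`
and `n² d² = (1 + √3)² = 2 d²`, i.e. `n² = 2`, impossible as `√2` is irrational.
-/

noncomputable def fusionDim (n : ℝ) : ℝ := (n + √(n ^ 2 + 4)) / 2

noncomputable def hypergroupCoeff (r : ℝ) : ℝ := 1 + r / 2 - r * √(1 / 4 + r⁻¹)

lemma fusionDim_sq (n : ℝ) : fusionDim n ^ 2 = 1 + n * fusionDim n := by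
  have hs : √(n ^ 2 + 4) ^ 2 = n ^ 2 + 4 := Real.sq_sqrt (by positivity)
  unfold fusionDim
  linear_combination hs / 4

lemma fusionDim_pos (n : ℝ) : 0 < fusionDim n := by
  have hlt : |n| < √(n ^ 2 + 4) := by
    rw [← Real.sqrt_sq_eq_abs]
    exact Real.sqrt_lt_sqrt (sq_nonneg n) (by linarith)
  unfold fusionDim
  linarith [neg_abs_le n]

lemma eq_fusionDim {n d : ℝ} (hd : 0 < d) (h : d ^ 2 = 1 + n * d) : d = fusionDim n := by
  have hnonneg : 0 ≤ 2 * d - n := by nlinarith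
  have hroot : √(n ^ 2 + 4) = 2 * d - n := by
    rw [← Real.sqrt_sq hnonneg]
    congr 1
    linear_combination -4 * h
  unfold fusionDim
  linarith

lemma inv_fusionDim (n : ℝ) : (fusionDim n)⁻¹ = fusionDim n - n := by
  have hne : fusionDim n ≠ 0 := (fusionDim_pos n).ne'
  field_simp
  linear_combination (fusionDim_sq n).symm

lemma sq_mul_sqrt_quarter_add_inv_sq {n : ℝ} (hn : 0 ≤ n) :
    n ^ 2 * √(1 / 4 + (n ^ 2)⁻¹) = n * √(n ^ 2 + 4) / 2 := by
  rcases hn.eq_or_lt with rfl | hpos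
  · simp
  have hquot : 1 / 4 + (n ^ 2)⁻¹ = (n ^ 2 + 4) / (2 * n) ^ 2 := by
    field_simp
    ring
  rw [hquot, Real.sqrt_div' _ (by positivity), Real.sqrt_sq (by positivity)]
  field_simp

lemma hypergroupCoeff_sq {n : ℝ} (hn : 0 ≤ n) : hypergroupCoeff (n ^ 2) = 1 / fusionDim n ^ 2 := by
  have hs : √(n ^ 2 + 4) ^ 2 = n ^ 2 + 4 := Real.sq_sqrt (by positivity)
  rw [hypergroupCoeff, sq_mul_sqrt_quarter_add_inv_sq hn, one_div, ← inv_pow, inv_fusionDim,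
    fusionDim]
  linear_combination -hs / 4

lemma sq_eq_two_of_sq_eq_two_add_sqrt_three {n d : ℝ} (h : d ^ 2 = 1 + n * d)
    (hd : d ^ 2 = 2 + √3) : n ^ 2 = 2 := by
  have h3 : √3 ^ 2 = 3 := Real.sq_sqrt (by norm_num)
  have hnd : n * d = 1 + √3 := by linarith
  have hd2 : d ^ 2 ≠ 0 := by rw [hd]; positivity
  apply mul_right_cancel₀ hd2
  calc n ^ 2 * d ^ 2 = (n * d) ^ 2 := by ring
    _ = 2 * d ^ 2 := by rw [hnd, hd]; linear_combination h3

lemma natCast_sq_ne_two (n : ℕ) : (n : ℝ) ^ 2 ≠ 2 := by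
  intro h
  apply irrational_sqrt_two.ne_nat n
  rw [← h, Real.sqrt_sq n.cast_nonneg]

/-- The two-element hypergroup with `k₁² = λ k₀ + (1-λ) k₁` arises from a
fusion algebra `f₁² = f₀ + n f₁` (`n ∈ ℕ`, with Perron–Frobenius dimension `d > 0`,
`d² = 1 + n d`, and `λ = 1/d²`) by rescaling if and only if
`λ = 1 + r/2 - r * √(1/4 + r⁻¹)` for some rational `r` of the form `r = n²`.
In particular, for `λ = 1/(2+√3)` there is no `n ∈ ℕ` with such a fusion algebra. -/
theorem stmt5 :
    (∀ lam : ℝ, 0 < lam → lam < 1 →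
      ((∃ (n : ℕ) (d : ℝ), 0 < d ∧ d ^ 2 = 1 + n * d ∧ lam = 1 / d ^ 2) ↔
        (∃ r : ℚ, (∃ n : ℕ, (r : ℝ) = (n : ℝ) ^ 2) ∧
          lam = 1 + (r : ℝ) / 2 - (r : ℝ) * Real.sqrt (1 / 4 + ((r : ℝ))⁻¹)))) ∧
    ¬ ∃ (n : ℕ) (d : ℝ), 0 < d ∧ d ^ 2 = 1 + n * d ∧
        1 / (2 + Real.sqrt 3) = 1 / d ^ 2 := by
  refine ⟨fun lam _ _ => ⟨?_, ?_⟩, ?_⟩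
  · rintro ⟨n, d, hd, h, rfl⟩
    refine ⟨(n : ℚ) ^ 2, ⟨n, by push_cast; rfl⟩, ?_⟩
    rw [eq_fusionDim hd h, ← hypergroupCoeff_sq n.cast_nonneg]
    push_cast
    rfl
  · rintro ⟨r, ⟨n, hr⟩, rfl⟩
    refine ⟨n, fusionDim n, fusionDim_pos n, fusionDim_sq n, ?_⟩
    rw [← hypergroupCoeff_sq n.cast_nonneg, ← hr]
    rfl
  · rintro ⟨n, d, -, h, hcoeff⟩
    simp only [one_div, inv_inj] at hcoeff
    exact natCast_sq_ne_two n (sq_eq_two_of_sq_eq_two_add_sqrt_three h hcoeff.symm)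
end
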